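/- Let 0 < γ < 1 and α > 1 satisfy αγ < γ + 1, and let 1 ≤ p < (γ+1)/(αγ). Define Ω₊ = {(x,y) ∈ (−1,1)² : y > φ(|x|)} ⊂ ℝ² with φ(s) = s^γ for s > 0 and φ(s) = 0 for s ≤ 0. Then the field u(x,y) = (y^{−α}, 0) belongs to L^p(Ω₊; ℝ²) and is divergence-free in the sense of distributions on Ω₊. -/

import Mathlib

open MeasureTheory Set
open scoped ENNReal

/-- `u` is divergence-free in the sense of distributions on the open set `U`. -/
def DivFreeOn {n : ℕ} (u : EuclideanSpace ℝ (Fin n) → EuclideanSpace ℝ (Fin n))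
    (U : Set (EuclideanSpace ℝ (Fin n))) : Prop :=
  ∀ φ : EuclideanSpace ℝ (Fin n) → ℝ, ContDiff ℝ (⊤ : ℕ∞) φ → HasCompactSupport φ →
    tsupport φ ⊆ U → (∫ x in U, (inner ℝ (u x) (gradient φ x) : ℝ)) = 0

/-- The cusp domain `Ω₊ = {(x,y) ∈ (-1,1)² : y > φ(|x|)}`, `φ(s) = s^γ` for `s > 0`. -/
noncomputable def cuspDomain (γ : ℝ) : Set (EuclideanSpace ℝ (Fin 2)) :=
  {x | x 0 ∈ Ioo (-1 : ℝ) 1 ∧ x 1 ∈ Ioo (-1 : ℝ) 1 ∧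
    (if 0 < |x 0| then |x 0| ^ γ else 0) < x 1}

lemma cusp_pos' {γ : ℝ} (hγ0 : 0 < γ) {x : EuclideanSpace ℝ (Fin 2)}
    (hx : x ∈ cuspDomain γ) : 0 < x 1 := by
  obtain ⟨-, -, h⟩ := hx
  by_cases h0 : 0 < |x 0|
  · rw [if_pos h0] at h
    exact lt_trans (Real.rpow_pos_of_pos h0 γ) h
  · rwa [if_neg h0] at h

/-- On the Hölder cusp domain `Ω₊`, the field `u(x,y) = (y^{-α}, 0)` is in `L^p` and
divergence-free in the sense of distributions, provided `αγ < γ + 1` and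
`1 ≤ p < (γ+1)/(αγ)`. -/
theorem stmt_12 (γ α p : ℝ) (hγ0 : 0 < γ) (hγ1 : γ < 1) (hα : 1 < α)
    (hαγ : α * γ < γ + 1) (hp1 : 1 ≤ p) (hp2 : p < (γ + 1) / (α * γ)) :
    MemLp (fun x : EuclideanSpace ℝ (Fin 2) =>
        (WithLp.toLp 2 (fun i => if i = 0 then (x 1) ^ (-α) else 0 : Fin 2 → ℝ) : EuclideanSpace ℝ (Fin 2)))
      (ENNReal.ofReal p) (volume.restrict (cuspDomain γ)) ∧
    DivFreeOn (fun x : EuclideanSpace ℝ (Fin 2) =>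
        (WithLp.toLp 2 (fun i => if i = 0 then (x 1) ^ (-α) else 0 : Fin 2 → ℝ) : EuclideanSpace ℝ (Fin 2)))
      (cuspDomain γ) := by
  constructor
  · have hp0 : 0 < p := lt_of_lt_of_le one_pos hp1
    have hαp0 : 0 < α := lt_trans one_pos hα
    -- rewrite u as single
    have husingle : ∀ x : EuclideanSpace ℝ (Fin 2),
        (WithLp.toLp 2 (fun i => if i = 0 then (x 1) ^ (-α) else 0 : Fin 2 → ℝ) : EuclideanSpace ℝ (Fin 2))
          = WithLp.toLp 2 (Pi.single (0 : Fin 2) ((x 1) ^ (-α))) := by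
      intro x; ext i; simp [Pi.single_apply]
    -- measurability
    have hmeas1 : Measurable fun x : EuclideanSpace ℝ (Fin 2) => (x 1) ^ (-α) :=
      ((continuous_apply (1 : Fin 2)).comp (PiLp.continuous_ofLp 2 _)).measurable.pow_const (-α)
    have hcs : Continuous fun c : ℝ => (WithLp.toLp 2 (Pi.single (0 : Fin 2) c) :
        EuclideanSpace ℝ (Fin 2)) := by
      have h : (fun c : ℝ => (WithLp.toLp 2 (Pi.single (0 : Fin 2) c) : EuclideanSpace ℝ (Fin 2)))
          = fun c : ℝ => c • (WithLp.toLp 2 (Pi.single (0 : Fin 2) (1:ℝ)) : EuclideanSpace ℝ (Fin 2)) := by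
        funext c; ext i; simp [Pi.single_apply]
      rw [h]
      exact continuous_id.smul continuous_const
    have humeas : Measurable fun x : EuclideanSpace ℝ (Fin 2) =>
        (WithLp.toLp 2 (fun i => if i = 0 then (x 1) ^ (-α) else 0 : Fin 2 → ℝ) : EuclideanSpace ℝ (Fin 2)) := by
      have h : (fun x : EuclideanSpace ℝ (Fin 2) =>
          (WithLp.toLp 2 (fun i => if i = 0 then (x 1) ^ (-α) else 0 : Fin 2 → ℝ) : EuclideanSpace ℝ (Fin 2)))
          = fun x => WithLp.toLp 2 (Pi.single (0 : Fin 2) ((x 1) ^ (-α))) := funext husingle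
      rw [h]
      exact hcs.measurable.comp hmeas1
    refine ⟨humeas.aestronglyMeasurable, ?_⟩
    have hq0 : (ENNReal.ofReal p) ≠ 0 := by
      simp [ENNReal.ofReal_eq_zero]; linarith
    have hqt : (ENNReal.ofReal p) ≠ ⊤ := ENNReal.ofReal_ne_top
    rw [eLpNorm_eq_lintegral_rpow_enorm_toReal hq0 hqt]
    have htr : (ENNReal.ofReal p).toReal = p := ENNReal.toReal_ofReal hp0.le
    rw [htr]
    -- the main lintegral estimate
    set G : ℝ → ℝ≥0∞ := fun t => (‖t ^ (-α)‖₊ : ℝ≥0∞) ^ p with hG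
    have hGmeas : Measurable G := (((measurable_id.pow_const (-α)).nnnorm.coe_nnreal_ennreal).pow_const _)
    set e : EuclideanSpace ℝ (Fin 2) ≃ᵐ ℝ × ℝ :=
      (MeasurableEquiv.toLp 2 (Fin 2 → ℝ)).symm.trans MeasurableEquiv.finTwoArrow with he
    have hepres : MeasurePreserving e volume volume :=
      (volume_preserving_finTwoArrow ℝ).comp
        (EuclideanSpace.volume_preserving_symm_measurableEquiv_toLp (Fin 2))
    have hex : ∀ x : EuclideanSpace ℝ (Fin 2), e x = (x 0, x 1) := fun x => rfl
    set S' : Set (ℝ × ℝ) := {z : ℝ × ℝ | z.2 ∈ Ioo (0:ℝ) 1 ∧ |z.1| ≤ z.2 ^ (1/γ)} with hS'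
    have hS'meas : MeasurableSet S' := by
      apply MeasurableSet.inter
      · exact measurable_snd measurableSet_Ioo
      · exact measurableSet_le measurable_fst.abs (measurable_snd.pow_const (1/γ))
    have hsub : cuspDomain γ ⊆ e ⁻¹' S' := by
      intro x hx
      have hx1 : 0 < x 1 := cusp_pos' hγ0 hx
      obtain ⟨-, hx1b, hcusp⟩ := hx
      refine mem_preimage.mpr ?_
      rw [hex]
      refine ⟨⟨hx1, hx1b.2⟩, ?_⟩
      by_cases h0 : 0 < |x 0|
      · rw [if_pos h0] at hcusp
        calc |x 0| = (|x 0| ^ γ) ^ (1/γ) := by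
              rw [← Real.rpow_mul (abs_nonneg _), mul_one_div_cancel hγ0.ne', Real.rpow_one]
          _ ≤ (x 1) ^ (1/γ) :=
              Real.rpow_le_rpow (Real.rpow_nonneg (abs_nonneg _) _) hcusp.le (by positivity)
      · have : |x 0| = 0 := le_antisymm (not_lt.mp h0) (abs_nonneg _)
        rw [this]
        exact Real.rpow_nonneg hx1.le _
    -- exponent bound
    set r : ℝ := 1/γ - α * p with hr
    have hrgt : -1 < r := by
      have h1 : p * (α * γ) < γ + 1 := (lt_div_iff₀ (by positivity)).mp hp2
      have h2 : (α * p - 1) * γ < 1 := by nlinarith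
      have h3 : α * p - 1 < 1 / γ := (lt_div_iff₀ hγ0).mpr h2
      simp only [hr]; linarith
    refine ENNReal.rpow_lt_top_of_nonneg (by positivity) (ne_of_lt ?_)
    simp only [husingle, PiLp.toLp_single, enorm_eq_nnnorm, PiLp.nnnorm_single]
    calc ∫⁻ x in cuspDomain γ, G (x 1) ∂volume
        ≤ ∫⁻ x in e ⁻¹' S', G (x 1) ∂volume := lintegral_mono_set hsub
      _ = ∫⁻ z in S', G z.2 ∂volume := by
          have := hepres.setLIntegral_comp_emb e.measurableEmbedding (fun z => G z.2) (e ⁻¹' S')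
          rw [image_preimage_eq _ e.surjective] at this
          rw [← this]
          rfl
      _ = ∫⁻ y in Ioo (0:ℝ) 1, G y * ENNReal.ofReal (2 * y ^ (1/γ)) ∂volume := by
          have hfm : Measurable fun z : ℝ × ℝ => S'.indicator (fun z => G z.2) z :=
            (hGmeas.comp measurable_snd).indicator hS'meas
          rw [← lintegral_indicator hS'meas, Measure.volume_eq_prod,
            lintegral_prod_symm _ hfm.aemeasurable,
            ← lintegral_indicator measurableSet_Ioo]
          apply lintegral_congr
          intro y
          by_cases hy : y ∈ Ioo (0:ℝ) 1
          · have hfib : ∀ x : ℝ, S'.indicator (fun z : ℝ × ℝ => G z.2) (x, y)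
                = (Icc (-(y ^ (1/γ))) (y ^ (1/γ))).indicator (fun _ => G y) x := by
              intro x
              by_cases hxm : |x| ≤ y ^ (1/γ)
              · rw [indicator_of_mem (show (x, y) ∈ S' from ⟨hy, hxm⟩),
                  indicator_of_mem (mem_Icc.mpr (abs_le.mp hxm))]
              · rw [indicator_of_notMem (show (x, y) ∉ S' from fun h => hxm h.2),
                  indicator_of_notMem (fun h => hxm (abs_le.mpr (mem_Icc.mp h)))]
            rw [indicator_of_mem hy]
            simp only [hfib]
            rw [lintegral_indicator_const measurableSet_Icc, Real.volume_Icc]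
            congr 1
            ring_nf
          · rw [indicator_of_notMem hy]
            have : ∀ x : ℝ, S'.indicator (fun z : ℝ × ℝ => G z.2) (x, y) = 0 := by
              intro x
              apply indicator_of_notMem
              intro h
              exact hy h.1
            simp only [this, lintegral_zero]
      _ = ∫⁻ y in Ioo (0:ℝ) 1, ENNReal.ofReal (2 * y ^ r) ∂volume := by
          apply setLIntegral_congr_fun measurableSet_Ioo
          intro y hy
          obtain ⟨hy0, hy1⟩ := hy
          have hnn : (0:ℝ) ≤ y ^ (-α) := Real.rpow_nonneg hy0.le _
          have h1 : (‖y ^ (-α)‖₊ : ℝ≥0∞) = ENNReal.ofReal (y ^ (-α)) := by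
            rw [← enorm_eq_nnnorm, ← ofReal_norm, Real.norm_eq_abs, abs_of_nonneg hnn]
          show (‖y ^ (-α)‖₊ : ℝ≥0∞) ^ p * ENNReal.ofReal (2 * y ^ (1/γ))
            = ENNReal.ofReal (2 * y ^ r)
          rw [h1, ENNReal.ofReal_rpow_of_nonneg hnn hp0.le,
            ← ENNReal.ofReal_mul (by positivity)]
          congr 1
          have e1 : (y ^ (-α)) ^ p = y ^ (-(α*p)) := by
            rw [← Real.rpow_mul hy0.le]; ring_nf
          have e2 : y ^ r = y ^ (1/γ) * y ^ (-(α*p)) := by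
            rw [hr, ← Real.rpow_add hy0]
            congr 1
            try ring
          rw [e1, e2]; ring
      _ < ⊤ := by
          have hi : IntervalIntegrable (fun y : ℝ => y ^ r) volume 0 1 :=
            intervalIntegral.intervalIntegrable_rpow' hrgt
          have hint : IntegrableOn (fun y : ℝ => 2 * y ^ r) (Ioo 0 1) volume :=
            ((intervalIntegrable_iff_integrableOn_Ioo_of_le (by norm_num)).mp hi).const_mul 2
          exact hint.lintegral_lt_top
  · intro φ hφ hφc hφs
    set v : EuclideanSpace ℝ (Fin 2) := EuclideanSpace.single 0 1 with hv
    have hv1 : v 1 = 0 := by simp [hv, EuclideanSpace.single_apply]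
    set u : EuclideanSpace ℝ (Fin 2) → EuclideanSpace ℝ (Fin 2) := fun x =>
        (WithLp.toLp 2 (fun i => if i = 0 then (x 1) ^ (-α) else 0 : Fin 2 → ℝ) : EuclideanSpace ℝ (Fin 2)) with hud
    -- rewrite integrand
    have hinner : ∀ x : EuclideanSpace ℝ (Fin 2),
        (inner ℝ (u x) (gradient φ x) : ℝ) = (x 1) ^ (-α) * fderiv ℝ φ x v := by
      intro x
      have hu : u x = ((x 1) ^ (-α)) • v := by
        ext i
        simp [hud, hv, EuclideanSpace.single_apply, Pi.smul_apply, mul_comm]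
      rw [hu, real_inner_comm, gradient, InnerProductSpace.toDual_symm_apply,
        ContinuousLinearMap.map_smul, smul_eq_mul]
    rcases eq_empty_or_nonempty (tsupport φ) with hK | hK
    · have hgrad : ∀ x, fderiv ℝ φ x = 0 := fun x =>
        fderiv_of_notMem_tsupport _ (by simp [hK])
      have h0 : ∀ x : EuclideanSpace ℝ (Fin 2), (inner ℝ (u x) (gradient φ x) : ℝ) = 0 := by
        intro x; rw [hinner, hgrad]; simp
      simp only [h0, integral_zero]
    -- get δ
    obtain ⟨x₀, hx₀K, hx₀min⟩ := (hφc : IsCompact (tsupport φ)).exists_isMinOn hK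
      ((continuous_apply (1 : Fin 2)).comp (PiLp.continuous_ofLp 2 _)).continuousOn
    set δ : ℝ := x₀ 1 with hδ
    have hδpos : 0 < δ := cusp_pos' hγ0 (hφs hx₀K)
    -- weight function
    set χ : ℝ → ℝ := fun t => Real.smoothTransition ((2 * t - δ) / δ) with hχ
    set w : ℝ → ℝ := fun t => χ t * t ^ (-α) with hw
    have hχdiff : Differentiable ℝ χ := by
      apply (Real.smoothTransition.contDiff (n := 1)).differentiable (by norm_num) |>.comp
      fun_prop
    have hχ0 : ∀ t ≤ δ / 2, χ t = 0 := by
      intro t ht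
      apply Real.smoothTransition.zero_of_nonpos
      apply div_nonpos_of_nonpos_of_nonneg (by linarith) hδpos.le
    have hw1 : ∀ t, δ ≤ t → w t = t ^ (-α) := by
      intro t ht
      have : χ t = 1 := Real.smoothTransition.one_of_one_le (by
        rw [le_div_iff₀ hδpos]; linarith)
      simp [hw, this]
    have hwdiff : Differentiable ℝ w := by
      intro t
      rcases lt_or_ge (δ/4) t with ht | ht
      · have ht0 : t ≠ 0 := by intro h; rw [h] at ht; linarith
        exact ((hχdiff t).mul (Real.differentiableAt_rpow_const_of_ne _ ht0))
      · have : w =ᶠ[nhds t] (fun _ => 0) := by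
          filter_upwards [Iio_mem_nhds (show t < δ/2 by linarith)] with s hs
          simp [hw, hχ0 s (le_of_lt hs)]
        exact (differentiableAt_const (0:ℝ)).congr_of_eventuallyEq this
    set L : EuclideanSpace ℝ (Fin 2) →L[ℝ] ℝ := EuclideanSpace.proj (1 : Fin 2) with hL
    set f : EuclideanSpace ℝ (Fin 2) → ℝ := fun x => w (x 1) with hf
    have hfd : ∀ x : EuclideanSpace ℝ (Fin 2),
        HasFDerivAt f ((deriv w (x 1)) • L) x := by
      intro x
      exact (hwdiff (x 1)).hasDerivAt.comp_hasFDerivAt x (L.hasFDerivAt)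
    have hfdiff : Differentiable ℝ f := fun x => (hfd x).differentiableAt
    have hfv : ∀ x, fderiv ℝ f x v = 0 := by
      intro x
      rw [(hfd x).fderiv]
      simp [hL, hv1]
    have hfcont : Continuous f := hfdiff.continuous
    -- equality of integrands
    have heq : ∀ x, (x 1) ^ (-α) * fderiv ℝ φ x v = f x * fderiv ℝ φ x v := by
      intro x
      by_cases hx : x ∈ tsupport φ
      · have hd : δ ≤ x 1 := hx₀min hx
        show x 1 ^ (-α) * (fderiv ℝ φ x) v = w (x 1) * (fderiv ℝ φ x) v
        rw [hw1 _ hd]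
      · rw [fderiv_of_notMem_tsupport _ hx]; simp
    -- integrability
    have hφdiff : Differentiable ℝ φ := hφ.differentiable (by simp)
    have hφfc : Continuous fun x => fderiv ℝ φ x v :=
      ((hφ.continuous_fderiv (by simp)).clm_apply continuous_const)
    have hsupp : HasCompactSupport fun x => fderiv ℝ φ x v := by
      apply HasCompactSupport.comp_left (g := fun L : EuclideanSpace ℝ (Fin 2) →L[ℝ] ℝ => L v)
        (hφc.fderiv ℝ) (by simp)
    have hint1 : Integrable (fun x => f x * fderiv ℝ φ x v) volume :=
      Continuous.integrable_of_hasCompactSupport (hfcont.mul hφfc) (hsupp.mul_left)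
    have hzero : (fun x : EuclideanSpace ℝ (Fin 2) => fderiv ℝ f x v * φ x) = fun _ => 0 := by
      funext x; rw [hfv]; ring
    have hint2 : Integrable (fun x => fderiv ℝ f x v * φ x) volume := by
      rw [hzero]; exact integrable_zero _ _ _
    have hint3 : Integrable (fun x => f x * φ x) volume :=
      Continuous.integrable_of_hasCompactSupport (hfcont.mul hφ.continuous) (hφc.mul_left)
    calc ∫ x in cuspDomain γ, (inner ℝ (u x) (gradient φ x) : ℝ)
        = ∫ x, f x * fderiv ℝ φ x v := by
          rw [show (fun x => (inner ℝ (u x) (gradient φ x) : ℝ))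
              = fun x => f x * fderiv ℝ φ x v from funext fun x => by rw [hinner, heq]]
          apply setIntegral_eq_integral_of_forall_compl_eq_zero (fun x hx => ?_)
          have hxt : x ∉ tsupport φ := fun h => hx (hφs h)
          rw [fderiv_of_notMem_tsupport _ hxt]; simp
      _ = - ∫ x, fderiv ℝ f x v * φ x :=
          integral_mul_fderiv_eq_neg_fderiv_mul_of_integrable hint2 hint1 hint3 (fun x _ => hfdiff x) (fun x _ => hφdiff x)
      _ = 0 := by rw [hzero]; simp
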